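/- Let k ≥ 1 and let Υ ⊆ F_{2,k}. Let A_{n,k}^Υ denote the number of F ∈ F_{n,k} with no Υ-matches. Then the following identity of formal power series in t over ℚ holds: (1 + Σ_{n≥1} A_{n,k}^Υ t^n/(kn)!) · (1 + Σ_{n≥1} (−1)^n full_n^Υ t^n/(kn)!) = 1. -/

import Mathlib

/-- `F` is a filling of the `k × n` rectangle (row `i`, `1 ≤ i ≤ k`, counted from the
bottom; column `j`, `1 ≤ j ≤ n`) with the integers `1, …, kn`, each used exactly once,
whose entries strictly increase up each column.  Cells outside the rectangle carry `0`. -/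
def IsFilling (n k : ℕ) (F : ℕ → ℕ → ℕ) : Prop :=
  (∀ i j, F i j ≠ 0 → 1 ≤ i ∧ i ≤ k ∧ 1 ≤ j ∧ j ≤ n) ∧
  Set.BijOn (fun p : ℕ × ℕ => F p.1 p.2) (Set.Icc 1 k ×ˢ Set.Icc 1 n) (Set.Icc 1 (k * n)) ∧
  ∀ i j, 1 ≤ i → i < k → 1 ≤ j → j ≤ n → F i j < F (i + 1) j

/-- The entries of `F` in columns `i, …, i + j - 1` are in the same relative order as the
`k × j` pattern `P`; i.e. `F` has a `P`-match starting at position `i`. -/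
def MatchAt (j k : ℕ) (P F : ℕ → ℕ → ℕ) (i : ℕ) : Prop :=
  ∀ a b c d, 1 ≤ a → a ≤ k → 1 ≤ b → b ≤ j → 1 ≤ c → c ≤ k → 1 ≤ d → d ≤ j →
    (F a (i - 1 + b) < F c (i - 1 + d) ↔ P a b < P c d)

/-- `full_n^Υ`: the number of fillings `F ∈ F_{n,k}` having `Υ`-matches starting at
every position `1, …, n-1` (for two-column patterns `Υ ⊆ F_{2,k}`). -/
noncomputable def fullCount (n k : ℕ) (U : Set (ℕ → ℕ → ℕ)) : ℕ :=
  Nat.card {F : ℕ → ℕ → ℕ // IsFilling n k F ∧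
    ∀ i, 1 ≤ i → i ≤ n - 1 → ∃ P ∈ U, MatchAt 2 k P F i}

/-- `A_{n,k}^Υ`: the number of fillings `F ∈ F_{n,k}` with no `Υ`-matches. -/
noncomputable def noMatchCount (n k : ℕ) (U : Set (ℕ → ℕ → ℕ)) : ℕ :=
  Nat.card {F : ℕ → ℕ → ℕ // IsFilling n k F ∧
    ∀ i, 1 ≤ i → i ≤ n - 1 → ¬ ∃ P ∈ U, MatchAt 2 k P F i}


/-
Cut a filling `F ∈ F_{n,k}` after its `j`-th column. The set of `kj` values in the first `j`
columns, together with the standardizations of the two blocks, determines `F`, and every such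
triple occurs. A match at a position other than `j` lies inside one block and is invisible to
standardization, so the number `N_j` of fillings whose first `j` columns have matches everywhere and
whose last `n - j` columns have none is `C(kn, kj) · full_j · A_{n-j}`, and the coefficient of
`t^n` in the product is `∑_j (-1)^j N_j / (kn)!`. Sorting by the match status at position `j`
gives `N_j = P_{j-1} + P_j`, where `P_m` counts the fillings with matches exactly at the positions
`1, …, m`; so the alternating sum telescopes to `0` for `n ≥ 1`.
-/

open Finset

section Rank

variable {S : Finset ℕ} {x y i i' : ℕ}

def rank (S : Finset ℕ) (x : ℕ) : ℕ := #{s ∈ S | s ≤ x}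

lemma rank_lt_rank (hy : y ∈ S) (hxy : x < y) : rank S x < rank S y := by
  refine card_lt_card ((ssubset_iff_of_subset fun s hs => ?_).2 ⟨y, ?_, ?_⟩)
  · simp only [mem_filter] at hs ⊢
    exact ⟨hs.1, hs.2.trans hxy.le⟩
  · exact mem_filter.2 ⟨hy, le_rfl⟩
  · simp [hxy]

lemma rank_strictMonoOn : StrictMonoOn (rank S) S := fun _ _ _ hy hxy => rank_lt_rank hy hxy

lemma rank_bijOn : Set.BijOn (rank S) S (Icc 1 #S) := by
  have hmaps : Set.MapsTo (rank S) S (Icc 1 #S) := fun x hx =>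
    mem_Icc.2 ⟨card_pos.2 ⟨x, mem_filter.2 ⟨hx, le_rfl⟩⟩, card_filter_le _ _⟩
  exact ⟨hmaps, rank_strictMonoOn.injOn,
    surjOn_of_injOn_of_card_le _ hmaps rank_strictMonoOn.injOn (by simp)⟩

noncomputable def unrank (S : Finset ℕ) : ℕ → ℕ := Function.invFunOn (rank S) S

lemma unrank_mem (hi : i ∈ Icc 1 #S) : unrank S i ∈ S :=
  rank_bijOn.surjOn.mapsTo_invFunOn hi

lemma rank_unrank (hi : i ∈ Icc 1 #S) : rank S (unrank S i) = i :=
  rank_bijOn.invOn_invFunOn.2 hi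

lemma unrank_rank (hx : x ∈ S) : unrank S (rank S x) = x :=
  rank_bijOn.invOn_invFunOn.1 hx

lemma unrank_lt_unrank_iff (hi : i ∈ Icc 1 #S) (hi' : i' ∈ Icc 1 #S) :
    unrank S i < unrank S i' ↔ i < i' := by
  rw [← rank_strictMonoOn.lt_iff_lt (unrank_mem hi) (unrank_mem hi'), rank_unrank hi,
    rank_unrank hi']

end Rank

section Filling

variable {n k w : ℕ} {F f g : ℕ → ℕ → ℕ} {a b : ℕ}

def cells (k w : ℕ) : Finset (ℕ × ℕ) := Icc 1 k ×ˢ Icc 1 w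

@[simp] lemma mem_cells : (a, b) ∈ cells k w ↔ (1 ≤ a ∧ a ≤ k) ∧ 1 ≤ b ∧ b ≤ w := by
  simp [cells]

lemma card_cells : #(cells k w) = k * w := by simp [cells]

lemma cells_mono {w w' : ℕ} (h : w ≤ w') : cells k w ⊆ cells k w' :=
  product_subset_product_right (Icc_subset_Icc_right h)

lemma isFilling_iff : IsFilling n k F ↔
    (∀ a b, (a, b) ∉ cells k n → F a b = 0) ∧
    Set.BijOn (Function.uncurry F) (cells k n) (Icc 1 (k * n)) ∧
    ∀ a b, (a, b) ∈ cells k n → a < k → F a b < F (a + 1) b := by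
  have hcells : (cells k n : Set (ℕ × ℕ)) = Set.Icc 1 k ×ˢ Set.Icc 1 n := by simp [cells]
  rw [IsFilling, coe_Icc, hcells]
  refine and_congr ⟨fun h a b hab => ?_, fun h a b hab => ?_⟩ (and_congr Iff.rfl ?_)
  · by_contra h0
    exact hab (by simpa [and_assoc] using h a b h0)
  · by_contra h'
    exact hab (h a b (by simpa [and_assoc] using h'))
  · simp only [mem_cells]
    exact ⟨fun h a b hab hak => h a b hab.1.1 hak hab.2.1 hab.2.2,
      fun h a b ha hak hb hbn => h a b ⟨⟨ha, hak.le⟩, hb, hbn⟩ hak⟩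

lemma IsFilling.eq_zero (hF : IsFilling n k F) (h : (a, b) ∉ cells k n) : F a b = 0 :=
  (isFilling_iff.1 hF).1 a b h

lemma IsFilling.bijOn (hF : IsFilling n k F) :
    Set.BijOn (Function.uncurry F) (cells k n) (Icc 1 (k * n)) :=
  (isFilling_iff.1 hF).2.1

lemma IsFilling.mem_Icc (hF : IsFilling n k F) (h : (a, b) ∈ cells k n) :
    F a b ∈ Icc 1 (k * n) :=
  hF.bijOn.mapsTo h

lemma IsFilling.lt_succ (hF : IsFilling n k F) (h : (a, b) ∈ cells k n) (hak : a < k) :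
    F a b < F (a + 1) b :=
  (isFilling_iff.1 hF).2.2 a b h hak

lemma IsFilling.le (hF : IsFilling n k F) (a b : ℕ) : F a b ≤ k * n := by
  by_cases h : (a, b) ∈ cells k n
  · exact (Finset.mem_Icc.1 (hF.mem_Icc h)).2
  · simp [hF.eq_zero h]

lemma isFilling_of_injOn (hzero : ∀ a b, (a, b) ∉ cells k n → F a b = 0)
    (hmaps : Set.MapsTo (Function.uncurry F) (cells k n) (Icc 1 (k * n)))
    (hinj : Set.InjOn (Function.uncurry F) (cells k n))
    (hcol : ∀ a b, (a, b) ∈ cells k n → a < k → F a b < F (a + 1) b) :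
    IsFilling n k F :=
  isFilling_iff.2 ⟨hzero,
    ⟨hmaps, hinj, surjOn_of_injOn_of_card_le _ hmaps hinj (by simp [card_cells])⟩, hcol⟩

lemma eq_of_eqOn_cells (hf : ∀ a b, (a, b) ∉ cells k n → f a b = 0)
    (hg : ∀ a b, (a, b) ∉ cells k n → g a b = 0) (h : ∀ a b, (a, b) ∈ cells k n → f a b = g a b) :
    f = g := by
  funext a b
  by_cases hab : (a, b) ∈ cells k n
  · exact h a b hab
  · rw [hf a b hab, hg a b hab]

lemma finite_setOf_isFilling (n k : ℕ) : {F | IsFilling n k F}.Finite := by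
  let restrict : (ℕ → ℕ → ℕ) → Fin (k + 1) × Fin (n + 1) → Fin (k * n + 1) :=
    fun F p => Fin.ofNat _ (F p.1 p.2)
  refine Set.Finite.of_finite_image (f := restrict) (Set.toFinite _) fun F hF G hG h => ?_
  refine eq_of_eqOn_cells (k := k) (n := n) (fun _ _ => hF.eq_zero) (fun _ _ => hG.eq_zero)
    fun a b hab => ?_
  simp only [mem_cells] at hab
  have := congrArg Fin.val (congrFun h (⟨a, by omega⟩, ⟨b, by omega⟩))
  simpa [restrict, Nat.mod_eq_of_lt (Nat.lt_succ_of_le (hF.le a b)),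
    Nat.mod_eq_of_lt (Nat.lt_succ_of_le (hG.le a b))] using this

end Filling

section Standardize

variable {n k w j : ℕ} {f F : ℕ → ℕ → ℕ} {S : Finset ℕ} {a b c d : ℕ}

def blockValues (k w : ℕ) (f : ℕ → ℕ → ℕ) : Finset ℕ := (cells k w).image (Function.uncurry f)

def standardize (k w : ℕ) (f : ℕ → ℕ → ℕ) : ℕ → ℕ → ℕ := fun a b =>
  if (a, b) ∈ cells k w then rank (blockValues k w f) (f a b) else 0

def shiftCols (j : ℕ) (f : ℕ → ℕ → ℕ) : ℕ → ℕ → ℕ := fun a b => f a (j + b)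

lemma mem_blockValues (h : (a, b) ∈ cells k w) : f a b ∈ blockValues k w f :=
  mem_image_of_mem (Function.uncurry f) h

lemma standardize_of_mem (h : (a, b) ∈ cells k w) :
    standardize k w f a b = rank (blockValues k w f) (f a b) := if_pos h

lemma standardize_of_not_mem (h : (a, b) ∉ cells k w) : standardize k w f a b = 0 := if_neg h

lemma standardize_lt_standardize_iff (hab : (a, b) ∈ cells k w) (hcd : (c, d) ∈ cells k w) :
    standardize k w f a b < standardize k w f c d ↔ f a b < f c d := by
  rw [standardize_of_mem hab, standardize_of_mem hcd]
  exact rank_strictMonoOn.lt_iff_lt (mem_blockValues hab) (mem_blockValues hcd)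

lemma card_blockValues (hinj : Set.InjOn (Function.uncurry f) (cells k w)) :
    #(blockValues k w f) = k * w := by
  rw [blockValues, card_image_of_injOn hinj, card_cells]

lemma isFilling_standardize (hinj : Set.InjOn (Function.uncurry f) (cells k w))
    (hcol : ∀ a b, (a, b) ∈ cells k w → a < k → f a b < f (a + 1) b) :
    IsFilling w k (standardize k w f) := by
  refine isFilling_of_injOn (fun a b => standardize_of_not_mem) ?_ ?_ ?_
  · rintro ⟨a, b⟩ hab
    rw [Function.uncurry_apply_pair, standardize_of_mem hab, ← card_blockValues hinj]
    exact rank_bijOn.mapsTo (mem_blockValues hab)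
  · rintro ⟨a, b⟩ hab ⟨c, d⟩ hcd h
    simp only [Function.uncurry_apply_pair, standardize_of_mem (mem_coe.1 hab),
      standardize_of_mem (mem_coe.1 hcd)] at h
    exact hinj hab hcd (rank_strictMonoOn.injOn (mem_blockValues hab) (mem_blockValues hcd) h)
  · intro a b hab hak
    have hab' : (a + 1, b) ∈ cells k w := by simp only [mem_cells] at hab ⊢; omega
    rw [standardize_lt_standardize_iff hab hab']
    exact hcol a b hab hak

lemma shift_mem_cells (h : (a, b) ∈ cells k (n - j)) : (a, j + b) ∈ cells k n := by
  simp only [mem_cells] at h ⊢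
  omega

lemma card_Icc_sdiff (hS : S ⊆ Icc 1 (k * n)) (hcard : #S = k * j) :
    #(Icc 1 (k * n) \ S) = k * (n - j) := by
  rw [card_sdiff_of_subset hS, Nat.card_Icc, hcard, Nat.mul_sub]
  rfl

lemma IsFilling.injOn_left (hF : IsFilling n k F) (hj : j ≤ n) :
    Set.InjOn (Function.uncurry F) (cells k j) :=
  hF.bijOn.injOn.mono (coe_subset.2 (cells_mono hj))

lemma IsFilling.injOn_shiftCols (hF : IsFilling n k F) :
    Set.InjOn (Function.uncurry (shiftCols j F)) (cells k (n - j)) := by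
  rintro ⟨a, b⟩ hab ⟨c, d⟩ hcd h
  have := hF.bijOn.injOn (shift_mem_cells hab) (shift_mem_cells hcd) h
  simp only [Prod.mk.injEq] at this ⊢
  omega

lemma IsFilling.isFilling_standardize_left (hF : IsFilling n k F) (hj : j ≤ n) :
    IsFilling j k (standardize k j F) :=
  isFilling_standardize (hF.injOn_left hj) fun _ _ hab => hF.lt_succ (cells_mono hj hab)

lemma IsFilling.isFilling_standardize_shiftCols (hF : IsFilling n k F) :
    IsFilling (n - j) k (standardize k (n - j) (shiftCols j F)) :=
  isFilling_standardize hF.injOn_shiftCols fun _ _ hab => hF.lt_succ (shift_mem_cells hab)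

lemma IsFilling.blockValues_subset (hF : IsFilling n k F) (hj : j ≤ n) :
    blockValues k j F ⊆ Icc 1 (k * n) := by
  intro y hy
  obtain ⟨⟨a, b⟩, hab, rfl⟩ := mem_image.1 hy
  exact hF.mem_Icc (cells_mono hj hab)

lemma IsFilling.blockValues_shiftCols (hF : IsFilling n k F) (hj : j ≤ n) :
    blockValues k (n - j) (shiftCols j F) = Icc 1 (k * n) \ blockValues k j F := by
  refine eq_of_subset_of_card_le (fun y hy => ?_) ?_
  · obtain ⟨⟨a, b⟩, hab, rfl⟩ := mem_image.1 hy
    refine mem_sdiff.2 ⟨hF.mem_Icc (shift_mem_cells hab), fun hleft => ?_⟩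
    obtain ⟨⟨c, d⟩, hcd, hval⟩ := mem_image.1 hleft
    have := hF.bijOn.injOn (cells_mono hj hcd) (shift_mem_cells hab) hval
    simp only [mem_cells, Prod.mk.injEq] at hab hcd this
    omega
  · rw [card_Icc_sdiff (hF.blockValues_subset hj) (card_blockValues (hF.injOn_left hj)),
      card_blockValues hF.injOn_shiftCols]

end Standardize

section Glue

variable {n k j : ℕ} {S : Finset ℕ} {F G H : ℕ → ℕ → ℕ} {a b : ℕ}

noncomputable def glue (n k j : ℕ) (S : Finset ℕ) (G H : ℕ → ℕ → ℕ) : ℕ → ℕ → ℕ := fun a b =>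
  if (a, b) ∈ cells k j then unrank S (G a b)
  else if (a, b) ∈ cells k n then unrank (Icc 1 (k * n) \ S) (H a (b - j)) else 0

lemma mem_cells_split (hj : j ≤ n) (h : (a, b) ∈ cells k n) :
    (a, b) ∈ cells k j ∨ ∃ b', (a, b') ∈ cells k (n - j) ∧ b = j + b' := by
  by_cases hb : b ≤ j
  · left
    simp only [mem_cells] at h ⊢
    omega
  · right
    refine ⟨b - j, ?_, by omega⟩
    simp only [mem_cells] at h ⊢
    omega

lemma glue_of_mem_left (h : (a, b) ∈ cells k j) : glue n k j S G H a b = unrank S (G a b) :=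
  if_pos h

lemma glue_add_of_mem (h : (a, b) ∈ cells k (n - j)) :
    glue n k j S G H a (j + b) = unrank (Icc 1 (k * n) \ S) (H a b) := by
  have hleft : (a, j + b) ∉ cells k j := by
    simp only [mem_cells] at h ⊢
    omega
  rw [glue, if_neg hleft, if_pos (shift_mem_cells h), Nat.add_sub_cancel_left]

lemma glue_of_not_mem (hj : j ≤ n) (h : (a, b) ∉ cells k n) : glue n k j S G H a b = 0 := by
  rw [glue, if_neg (fun h' => h (cells_mono hj h')), if_neg h]

lemma injOn_glue (hj : j ≤ n) (hS : S ⊆ Icc 1 (k * n)) (hcard : #S = k * j)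
    (hG : IsFilling j k G) (hH : IsFilling (n - j) k H) :
    Set.InjOn (Function.uncurry (glue n k j S G H)) (cells k n) := by
  have hGS : ∀ {a b}, (a, b) ∈ cells k j → G a b ∈ Icc 1 #S := fun h => hcard ▸ hG.mem_Icc h
  have hHT : ∀ {a b}, (a, b) ∈ cells k (n - j) → H a b ∈ Icc 1 #(Icc 1 (k * n) \ S) :=
    fun h => card_Icc_sdiff hS hcard ▸ hH.mem_Icc h
  rintro ⟨a, b⟩ hab ⟨c, d⟩ hcd h
  simp only [Function.uncurry_apply_pair] at h
  rcases mem_cells_split hj hab with hl | ⟨b, hl, rfl⟩ <;>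
    rcases mem_cells_split hj hcd with hl' | ⟨d, hl', rfl⟩
  · rw [glue_of_mem_left hl, glue_of_mem_left hl'] at h
    refine hG.bijOn.injOn hl hl' ?_
    simp only [Function.uncurry_apply_pair]
    rw [← rank_unrank (hGS hl), ← rank_unrank (hGS hl'), h]
  · rw [glue_of_mem_left hl, glue_add_of_mem hl'] at h
    exact ((mem_sdiff.1 (unrank_mem (hHT hl'))).2 (h ▸ unrank_mem (hGS hl))).elim
  · rw [glue_add_of_mem hl, glue_of_mem_left hl'] at h
    exact ((mem_sdiff.1 (unrank_mem (hHT hl))).2 (h ▸ unrank_mem (hGS hl'))).elim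
  · rw [glue_add_of_mem hl, glue_add_of_mem hl'] at h
    have := hH.bijOn.injOn hl hl' (by
      simp only [Function.uncurry_apply_pair]
      rw [← rank_unrank (hHT hl), ← rank_unrank (hHT hl'), h])
    simp only [Prod.mk.injEq] at this ⊢
    omega

lemma isFilling_glue (hj : j ≤ n) (hS : S ⊆ Icc 1 (k * n)) (hcard : #S = k * j)
    (hG : IsFilling j k G) (hH : IsFilling (n - j) k H) :
    IsFilling n k (glue n k j S G H) := by
  have hGS : ∀ {a b}, (a, b) ∈ cells k j → G a b ∈ Icc 1 #S := fun h => hcard ▸ hG.mem_Icc h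
  have hHT : ∀ {a b}, (a, b) ∈ cells k (n - j) → H a b ∈ Icc 1 #(Icc 1 (k * n) \ S) :=
    fun h => card_Icc_sdiff hS hcard ▸ hH.mem_Icc h
  refine isFilling_of_injOn (fun a b => glue_of_not_mem hj) ?_
    (injOn_glue hj hS hcard hG hH) ?_
  · rintro ⟨a, b⟩ hab
    rcases mem_cells_split hj hab with hl | ⟨b, hr, rfl⟩
    · rw [Function.uncurry_apply_pair, glue_of_mem_left hl]
      exact mem_coe.2 (hS (unrank_mem (hGS hl)))
    · rw [Function.uncurry_apply_pair, glue_add_of_mem hr]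
      exact mem_coe.2 (mem_sdiff.1 (unrank_mem (hHT hr))).1
  · intro a b hab hak
    rcases mem_cells_split hj hab with hl | ⟨b, hr, rfl⟩
    · have hl' : (a + 1, b) ∈ cells k j := by simp only [mem_cells] at hl ⊢; omega
      rw [glue_of_mem_left hl, glue_of_mem_left hl', unrank_lt_unrank_iff (hGS hl) (hGS hl')]
      exact hG.lt_succ hl hak
    · have hr' : (a + 1, b) ∈ cells k (n - j) := by simp only [mem_cells] at hr ⊢; omega
      rw [glue_add_of_mem hr, glue_add_of_mem hr', unrank_lt_unrank_iff (hHT hr) (hHT hr')]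
      exact hH.lt_succ hr hak

end Glue

section Split

variable {n k j : ℕ} {S : Finset ℕ} {F G H : ℕ → ℕ → ℕ}

lemma blockValues_glue (hj : j ≤ n) (hS : S ⊆ Icc 1 (k * n)) (hcard : #S = k * j)
    (hG : IsFilling j k G) (hH : IsFilling (n - j) k H) :
    blockValues k j (glue n k j S G H) = S := by
  refine eq_of_subset_of_card_le (fun y hy => ?_) ?_
  · obtain ⟨⟨a, b⟩, hab, rfl⟩ := mem_image.1 hy
    rw [Function.uncurry_apply_pair, glue_of_mem_left hab]
    exact unrank_mem (hcard ▸ hG.mem_Icc hab)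
  · rw [hcard, card_blockValues ((isFilling_glue hj hS hcard hG hH).injOn_left hj)]

lemma standardize_glue (hj : j ≤ n) (hS : S ⊆ Icc 1 (k * n)) (hcard : #S = k * j)
    (hG : IsFilling j k G) (hH : IsFilling (n - j) k H) :
    standardize k j (glue n k j S G H) = G :=
  eq_of_eqOn_cells (fun _ _ => standardize_of_not_mem) (fun _ _ => hG.eq_zero) fun a b hab => by
    rw [standardize_of_mem hab, blockValues_glue hj hS hcard hG hH, glue_of_mem_left hab,
      rank_unrank (hcard ▸ hG.mem_Icc hab)]

lemma standardize_shiftCols_glue (hj : j ≤ n) (hS : S ⊆ Icc 1 (k * n)) (hcard : #S = k * j)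
    (hG : IsFilling j k G) (hH : IsFilling (n - j) k H) :
    standardize k (n - j) (shiftCols j (glue n k j S G H)) = H :=
  eq_of_eqOn_cells (fun _ _ => standardize_of_not_mem) (fun _ _ => hH.eq_zero) fun a b hab => by
    rw [standardize_of_mem hab, (isFilling_glue hj hS hcard hG hH).blockValues_shiftCols hj,
      blockValues_glue hj hS hcard hG hH, shiftCols, glue_add_of_mem hab,
      rank_unrank (card_Icc_sdiff hS hcard ▸ hH.mem_Icc hab)]

lemma IsFilling.glue_split (hF : IsFilling n k F) (hj : j ≤ n) :
    glue n k j (blockValues k j F) (standardize k j F) (standardize k (n - j) (shiftCols j F))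
      = F :=
  eq_of_eqOn_cells (fun _ _ => glue_of_not_mem hj) (fun _ _ => hF.eq_zero) fun a b hab => by
    rcases mem_cells_split hj hab with hl | ⟨b, hr, rfl⟩
    · rw [glue_of_mem_left hl, standardize_of_mem hl, unrank_rank (mem_blockValues hl)]
    · have hmem := mem_blockValues (f := shiftCols j F) hr
      rw [hF.blockValues_shiftCols hj] at hmem
      rw [glue_add_of_mem hr, standardize_of_mem hr, hF.blockValues_shiftCols hj,
        unrank_rank hmem, shiftCols]

noncomputable def fillingSplitEquiv (hj : j ≤ n) (p q : (ℕ → ℕ → ℕ) → Prop) :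
    {F // IsFilling n k F ∧ p (standardize k j F) ∧ q (standardize k (n - j) (shiftCols j F))} ≃
      powersetCard (k * j) (Icc 1 (k * n)) × {G // IsFilling j k G ∧ p G} ×
        {H // IsFilling (n - j) k H ∧ q H} where
  toFun F :=
    (⟨blockValues k j F, mem_powersetCard.2
        ⟨F.2.1.blockValues_subset hj, card_blockValues (F.2.1.injOn_left hj)⟩⟩,
      ⟨standardize k j F, F.2.1.isFilling_standardize_left hj, F.2.2.1⟩,
      ⟨standardize k (n - j) (shiftCols j F), F.2.1.isFilling_standardize_shiftCols, F.2.2.2⟩)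
  invFun x :=
    have hS := mem_powersetCard.1 x.1.2
    ⟨glue n k j x.1 x.2.1 x.2.2, isFilling_glue hj hS.1 hS.2 x.2.1.2.1 x.2.2.2.1,
      by rw [standardize_glue hj hS.1 hS.2 x.2.1.2.1 x.2.2.2.1]; exact x.2.1.2.2,
      by rw [standardize_shiftCols_glue hj hS.1 hS.2 x.2.1.2.1 x.2.2.2.1]; exact x.2.2.2.2⟩
  left_inv F := Subtype.ext (F.2.1.glue_split hj)
  right_inv x := by
    have hS := mem_powersetCard.1 x.1.2
    exact Prod.ext (Subtype.ext (blockValues_glue hj hS.1 hS.2 x.2.1.2.1 x.2.2.2.1))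
      (Prod.ext (Subtype.ext (standardize_glue hj hS.1 hS.2 x.2.1.2.1 x.2.2.2.1))
        (Subtype.ext (standardize_shiftCols_glue hj hS.1 hS.2 x.2.1.2.1 x.2.2.2.1)))

lemma card_isFilling_split (hj : j ≤ n) (p q : (ℕ → ℕ → ℕ) → Prop) :
    Nat.card {F // IsFilling n k F ∧ p (standardize k j F) ∧
        q (standardize k (n - j) (shiftCols j F))} =
      (k * n).choose (k * j) * (Nat.card {G // IsFilling j k G ∧ p G} *
        Nat.card {H // IsFilling (n - j) k H ∧ q H}) := by
  rw [Nat.card_congr (fillingSplitEquiv hj p q), Nat.card_prod, Nat.card_prod,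
    Nat.card_eq_finsetCard, card_powersetCard, Nat.card_Icc, Nat.add_sub_cancel]

end Split

section Matches

variable {m k w j i i' : ℕ} {U : Set (ℕ → ℕ → ℕ)} {P F F' f : ℕ → ℕ → ℕ}

lemma matchAt_congr (h : ∀ a b c d, (a, b) ∈ cells k m → (c, d) ∈ cells k m →
      (F a (i - 1 + b) < F c (i - 1 + d) ↔ F' a (i' - 1 + b) < F' c (i' - 1 + d))) :
    MatchAt m k P F i ↔ MatchAt m k P F' i' := by
  refine forall₄_congr fun a b c d => ?_
  refine ⟨fun hm h1 h2 h3 h4 h5 h6 h7 h8 => ?_, fun hm h1 h2 h3 h4 h5 h6 h7 h8 => ?_⟩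
  · rw [← h a b c d (mem_cells.2 ⟨⟨h1, h2⟩, h3, h4⟩) (mem_cells.2 ⟨⟨h5, h6⟩, h7, h8⟩)]
    exact hm h1 h2 h3 h4 h5 h6 h7 h8
  · rw [h a b c d (mem_cells.2 ⟨⟨h1, h2⟩, h3, h4⟩) (mem_cells.2 ⟨⟨h5, h6⟩, h7, h8⟩)]
    exact hm h1 h2 h3 h4 h5 h6 h7 h8

lemma matchAt_standardize (h : i - 1 + m ≤ w) :
    MatchAt m k P (standardize k w f) i ↔ MatchAt m k P f i := by
  have hwindow : ∀ {a b}, (a, b) ∈ cells k m → (a, i - 1 + b) ∈ cells k w := fun hab => by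
    simp only [mem_cells] at hab ⊢
    omega
  exact matchAt_congr fun a b c d hab hcd =>
    standardize_lt_standardize_iff (hwindow hab) (hwindow hcd)

lemma matchAt_shiftCols (hi : 1 ≤ i) :
    MatchAt m k P (shiftCols j f) i ↔ MatchAt m k P f (j + i) :=
  matchAt_congr fun a b c d _ _ => by
    simp only [shiftCols, show ∀ b, j + (i - 1 + b) = j + i - 1 + b by omega]

def HasMatchAt (k : ℕ) (U : Set (ℕ → ℕ → ℕ)) (F : ℕ → ℕ → ℕ) (i : ℕ) : Prop :=
  ∃ P ∈ U, MatchAt 2 k P F i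

lemma hasMatchAt_standardize (hi : 1 ≤ i) (hw : i + 1 ≤ w) :
    HasMatchAt k U (standardize k w f) i ↔ HasMatchAt k U f i :=
  exists_congr fun _ => and_congr_right fun _ => matchAt_standardize (by omega)

lemma hasMatchAt_shiftCols (hi : 1 ≤ i) :
    HasMatchAt k U (shiftCols j f) i ↔ HasMatchAt k U f (j + i) :=
  exists_congr fun _ => and_congr_right fun _ => matchAt_shiftCols hi

end Matches

section Counts

variable {n k j : ℕ} {U : Set (ℕ → ℕ → ℕ)}

/- `matchCount n k U (j - 1) (j + 1)` and `matchCount n k U m (m + 1)` are the `N_j` and `P_m` of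
the proof sketch at the top. -/
noncomputable def matchCount (n k : ℕ) (U : Set (ℕ → ℕ → ℕ)) (a b : ℕ) : ℕ :=
  Nat.card {F // IsFilling n k F ∧ (∀ i, 1 ≤ i → i ≤ a → HasMatchAt k U F i) ∧
    ∀ i, b ≤ i → i ≤ n - 1 → ¬ HasMatchAt k U F i}

lemma matchCount_eq_choose_mul (hj : j ≤ n) :
    matchCount n k U (j - 1) (j + 1) =
      (k * n).choose (k * j) * (fullCount j k U * noMatchCount (n - j) k U) := by
  have hprefix : ∀ F, (∀ i, 1 ≤ i → i ≤ j - 1 → HasMatchAt k U F i) ↔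
      ∀ i, 1 ≤ i → i ≤ j - 1 → HasMatchAt k U (standardize k j F) i := fun F =>
    forall_congr' fun i => forall_congr' fun _ => forall_congr' fun _ =>
      (hasMatchAt_standardize (by omega) (by omega)).symm
  have hsuffix : ∀ F, (∀ i, j + 1 ≤ i → i ≤ n - 1 → ¬ HasMatchAt k U F i) ↔
      ∀ i, 1 ≤ i → i ≤ n - j - 1 →
        ¬ HasMatchAt k U (standardize k (n - j) (shiftCols j F)) i := by
    refine fun F => ⟨fun h i hi1 hi2 => ?_, fun h i hi1 hi2 => ?_⟩
    · rw [hasMatchAt_standardize (by omega) (by omega), hasMatchAt_shiftCols hi1]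
      exact h (j + i) (by omega) (by omega)
    · have := h (i - j) (by omega) (by omega)
      rwa [hasMatchAt_standardize (by omega) (by omega), hasMatchAt_shiftCols (by omega),
        Nat.add_sub_cancel' (by omega)] at this
  exact (Nat.card_congr (Equiv.subtypeEquivRight fun F =>
    and_congr_right' (and_congr (hprefix F) (hsuffix F)))).trans
      (card_isFilling_split hj (fun G => ∀ i, 1 ≤ i → i ≤ j - 1 → HasMatchAt k U G i)
        (fun H => ∀ i, 1 ≤ i → i ≤ n - j - 1 → ¬ HasMatchAt k U H i))

lemma Nat.card_eq_card_and_add_card_and_not {α : Type*} {p : α → Prop} (q : α → Prop)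
    (hp : {x | p x}.Finite) :
    Nat.card {x // p x} = Nat.card {x // p x ∧ q x} + Nat.card {x // p x ∧ ¬ q x} := by
  have := Set.ncard_inter_add_ncard_sdiff_eq_ncard {x | p x} {x | q x} hp
  rw [← Nat.card_coe_set_eq, ← Nat.card_coe_set_eq, ← Nat.card_coe_set_eq] at this
  exact this.symm

lemma matchCount_eq_add (h : j + 2 ≤ n) :
    matchCount n k U j (j + 2) =
      matchCount n k U j (j + 1) + matchCount n k U (j + 1) (j + 2) := by
  rw [matchCount, Nat.card_eq_card_and_add_card_and_not (fun F => HasMatchAt k U F (j + 1))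
    ((finite_setOf_isFilling n k).subset fun F hF => hF.1), add_comm]
  congr 1 <;> refine Nat.card_congr (Equiv.subtypeEquivRight fun F => ?_)
  · constructor
    · rintro ⟨⟨hF, hle, hgt⟩, hnext⟩
      exact ⟨hF, hle, fun i hi1 hi2 => if hi : i = j + 1 then hi ▸ hnext else hgt i (by omega) hi2⟩
    · rintro ⟨hF, hle, hgt⟩
      exact ⟨⟨hF, hle, fun i hi1 hi2 => hgt i (by omega) hi2⟩, hgt (j + 1) le_rfl (by omega)⟩
  · constructor
    · rintro ⟨⟨hF, hle, hgt⟩, hnext⟩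
      exact ⟨hF, fun i hi1 hi2 => if hi : i = j + 1 then hi ▸ hnext else hle i hi1 (by omega), hgt⟩
    · rintro ⟨hF, hle, hgt⟩
      exact ⟨⟨hF, fun i hi1 hi2 => hle i hi1 (by omega), hgt⟩, hle (j + 1) (by omega) le_rfl⟩

lemma matchCount_add_two_eq_add_one (m : ℕ) :
    matchCount (m + 1) k U m (m + 2) = matchCount (m + 1) k U m (m + 1) :=
  Nat.card_congr (Equiv.subtypeEquivRight fun F => and_congr_right' (and_congr_right' (by
    constructor <;> intro _ i hi1 hi2 <;> exact absurd hi2 (by omega))))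

lemma card_isFilling_zero (k : ℕ) (p : (ℕ → ℕ → ℕ) → Prop) (hp : p fun _ _ => 0) :
    Nat.card {F // IsFilling 0 k F ∧ p F} = 1 := by
  have hzero : ∀ F, IsFilling 0 k F → F = fun _ _ => 0 := fun F hF =>
    eq_of_eqOn_cells (fun _ _ => hF.eq_zero) (fun _ _ _ => rfl) fun a b hab => by
      simp only [mem_cells] at hab
      omega
  refine Nat.card_eq_one_iff_unique.2 ⟨⟨fun F G => Subtype.ext ?_⟩, ⟨⟨fun _ _ => 0, ?_, hp⟩⟩⟩
  · rw [hzero F F.2.1, hzero G G.2.1]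
  · refine isFilling_of_injOn (fun _ _ _ => rfl) ?_ ?_ ?_ <;> simp [cells]

lemma fullCount_zero : fullCount 0 k U = 1 :=
  card_isFilling_zero k _ fun _ _ h => absurd h (by omega)

lemma noMatchCount_zero : noMatchCount 0 k U = 1 :=
  card_isFilling_zero k _ fun _ _ h => absurd h (by omega)

end Counts

lemma sum_range_alternating_eq_zero {R : Type*} [CommRing R] (N P : ℕ → R) (m : ℕ)
    (h0 : N 0 = P 0) (hsucc : ∀ j < m, N (j + 1) = P j + P (j + 1)) (hlast : N (m + 1) = P m) :
    ∑ j ∈ range (m + 2), (-1) ^ j * N j = 0 := by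
  have hpartial : ∀ j ≤ m, ∑ i ∈ range (j + 1), (-1) ^ i * N i = (-1) ^ j * P j := by
    intro j hj
    induction j with
    | zero => simp [h0]
    | succ j ih =>
      rw [sum_range_succ, ih (by omega), hsucc j (by omega)]
      ring
  rw [sum_range_succ, hpartial m le_rfl, hlast]
  ring

section Series

variable {k : ℕ} {U : Set (ℕ → ℕ → ℕ)}

lemma sum_alternating_matchCount_eq_zero (m : ℕ) :
    ∑ j ∈ range (m + 2), (-1 : ℚ) ^ j * matchCount (m + 1) k U (j - 1) (j + 1) = 0 :=
  sum_range_alternating_eq_zero _ (fun j => (matchCount (m + 1) k U j (j + 1) : ℚ)) m rfl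
    (fun j hj => by
      rw [Nat.add_sub_cancel]
      exact_mod_cast matchCount_eq_add (by omega))
    (by exact_mod_cast matchCount_add_two_eq_add_one m)

lemma PowerSeries.mk_ite_zero {R : Type*} [Semiring R] {f : ℕ → R} (h : f 0 = 1) :
    PowerSeries.mk (fun n => if n = 0 then 1 else f n) = PowerSeries.mk f := by
  ext (_ | n) <;> simp [h]

lemma coeff_mul_eq_sum_matchCount (n : ℕ) :
    PowerSeries.coeff n
        (PowerSeries.mk (fun n => (-1) ^ n * (fullCount n k U : ℚ) / ((k * n).factorial : ℚ)) *
          PowerSeries.mk fun n => (noMatchCount n k U : ℚ) / ((k * n).factorial : ℚ)) =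
      (∑ j ∈ range (n + 1), (-1) ^ j * (matchCount n k U (j - 1) (j + 1) : ℚ)) /
        ((k * n).factorial : ℚ) := by
  rw [PowerSeries.coeff_mul, Nat.sum_antidiagonal_eq_sum_range_succ_mk, sum_div]
  refine sum_congr rfl fun j hj => ?_
  have hj : j ≤ n := Nat.lt_succ_iff.1 (mem_range.1 hj)
  have hk : k * n - k * j = k * (n - j) := (Nat.mul_sub k n j).symm
  simp only [PowerSeries.coeff_mk]
  rw [matchCount_eq_choose_mul hj, Nat.cast_mul, Nat.cast_choose ℚ (Nat.mul_le_mul_left k hj), hk]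
  push_cast
  field_simp

end Series

theorem stmt3_general (k : ℕ) (U : Set (ℕ → ℕ → ℕ)) :
    (PowerSeries.mk fun n => if n = 0 then (1 : ℚ) else
        (noMatchCount n k U : ℚ) / ((k * n).factorial : ℚ)) *
    (PowerSeries.mk fun n => if n = 0 then (1 : ℚ) else
        (-1) ^ n * (fullCount n k U : ℚ) / ((k * n).factorial : ℚ)) = 1 := by
  rw [PowerSeries.mk_ite_zero (by simp [noMatchCount_zero]),
    PowerSeries.mk_ite_zero (by simp [fullCount_zero]), mul_comm]
  ext (_ | m)
  · simp [fullCount_zero, noMatchCount_zero]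
  · rw [coeff_mul_eq_sum_matchCount, sum_alternating_matchCount_eq_zero, zero_div,
      PowerSeries.coeff_one, if_neg m.succ_ne_zero]

/-- Theorem: `(1 + Σ_{n≥1} A_{n,k}^Υ t^n/(kn)!) · (1 + Σ_{n≥1} (-1)^n full_n^Υ t^n/(kn)!) = 1`
as formal power series in `t` over `ℚ`. -/
theorem stmt3 (k : ℕ) (hk : 1 ≤ k) (U : Set (ℕ → ℕ → ℕ))
    (hU : ∀ P ∈ U, IsFilling 2 k P) :
    (PowerSeries.mk fun n => if n = 0 then (1 : ℚ) else
        (noMatchCount n k U : ℚ) / ((k * n).factorial : ℚ)) *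
    (PowerSeries.mk fun n => if n = 0 then (1 : ℚ) else
        (-1) ^ n * (fullCount n k U : ℚ) / ((k * n).factorial : ℚ)) = 1 :=
  stmt3_general k U
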